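/- arXiv:2505.04820 — 2 statements merged into one kernel-verified Lean document; each statement's English description precedes it below -/
import Mathlib

section
/- Let h : ℂ^N → ℝ be convex and differentiable, let W ∈ ℂ^{N×N} be Hermitian positive definite, let C ⊆ ℂ^N be a nonempty closed convex set, let α > 0, and let g ∈ ℂ^N. Fix x ∈ C and let x̄⁺ ∈ C be a minimizer over C of x̄ ↦ S_h(x̄, x, g, W, α). Define the generalized gradient mapping G = (1/α)(x − x̄⁺). Then D_h^C(x, g, W, α) ≥ ‖G‖_W². -/
/-!
Write `q = ‖x̄⁺ − x‖_W² / (2α)` and `L = Re⟨g, x̄⁺ − x⟩ + h(x̄⁺) − h(x)`, so that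
`S_h(x̄⁺) = L + q`. On the segment `x + s (x̄⁺ − x)`, `s ∈ [0, 1]`, which lies in `C`,
convexity of `h` bounds the surrogate by `s L + s² q`; minimality of `x̄⁺` then gives
`(1 − s)(L + (1 + s) q) ≤ 0`, and letting `s → 1⁻` yields `L + 2q ≤ 0`, i.e.
`S_h(x̄⁺) ≤ −q`. Since the infimum defining `D_h^C` is attained at `x̄⁺`,
`D_h^C = −(2/α) S_h(x̄⁺) ≥ 2q/α = ‖G‖_W²`.
-/

open scoped ComplexOrder

noncomputable section

/-- `ℂ^N` with the standard complex inner product (conjugate-linear in the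
first argument) and the induced norm. -/
abbrev EC (N : ℕ) := EuclideanSpace ℂ (Fin N)

/-- Weighted squared norm `‖z‖_W² = zᴴ W z` (its real part, which is the full
value when `W` is Hermitian). -/
def wnorm2 {N : ℕ} (W : Matrix (Fin N) (Fin N) ℂ) (z : EC N) : ℝ :=
  (dotProduct (fun i => starRingEnd ℂ (z i)) (W.mulVec (fun i => z i))).re

/-- Surrogate `S_h(x̄, x, g, W, α) = Re⟨g, x̄ − x⟩ + (1/(2α))‖x̄ − x‖_W² + h(x̄) − h(x)`. -/
def Sh {N : ℕ} (h : EC N → ℝ) (W : Matrix (Fin N) (Fin N) ℂ) (α : ℝ)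
    (g x xb : EC N) : ℝ :=
  (inner ℂ g (xb - x) : ℂ).re + (1 / (2 * α)) * wnorm2 W (xb - x) + h xb - h x

/-- `D_h^C(x, g, W, α) = −(2/α)·inf_{x̄ ∈ C} S_h(x̄, x, g, W, α)`. -/
def Dh {N : ℕ} (h : EC N → ℝ) (C : Set (EC N)) (W : Matrix (Fin N) (Fin N) ℂ)
    (α : ℝ) (g x : EC N) : ℝ :=
  -(2 / α) * sInf ((fun xb => Sh h W α g x xb) '' C)

/-- The real-linear continuous functional `d ↦ Re⟨g, d⟩`, used to say that a
real-differentiable `f : ℂ^N → ℝ` has gradient `g` at a point. -/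
def gradDual {N : ℕ} (g : EC N) : EC N →L[ℝ] ℝ :=
  Complex.reCLM.comp ((innerSL ℂ g).restrictScalars ℝ)

/-- The rank-one matrix `u·uᴴ` with entries `uᵢ · conj(uⱼ)`. -/
def rankOne {N : ℕ} (u : EC N) : Matrix (Fin N) (Fin N) ℂ :=
  Matrix.vecMulVec (fun i => u i) (fun i => starRingEnd ℂ (u i))

end

open Set Filter Topology

lemma wnorm2_smul {N : ℕ} (W : Matrix (Fin N) (Fin N) ℂ) (c : ℝ) (z : EC N) :
    wnorm2 W (c • z) = c ^ 2 * wnorm2 W z := by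
  have hz : (fun i => (c • z) i) = (c : ℂ) • fun i => z i := by
    funext i
    simp [Complex.real_smul]
  have hz' : (fun i => starRingEnd ℂ ((c • z) i)) = (c : ℂ) • fun i => starRingEnd ℂ (z i) := by
    funext i
    simp [Complex.real_smul]
  rw [wnorm2, wnorm2, hz, hz', Matrix.mulVec_smul, smul_dotProduct, dotProduct_smul,
    smul_smul, smul_eq_mul, ← Complex.ofReal_mul, Complex.re_ofReal_mul, sq]

lemma Sh_add_smul_sub_le {N : ℕ} {h : EC N → ℝ} (hconv : ConvexOn ℝ univ h)
    (W : Matrix (Fin N) (Fin N) ℂ) (α : ℝ) (g x y : EC N) {s : ℝ} (hs₀ : 0 ≤ s) (hs₁ : s ≤ 1) :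
    Sh h W α g x (x + s • (y - x)) ≤
      s * ((inner ℂ g (y - x) : ℂ).re + h y - h x) + s ^ 2 * (1 / (2 * α) * wnorm2 W (y - x)) := by
  have hh : h (x + s • (y - x)) ≤ (1 - s) * h x + s * h y := by
    have := hconv.2 (mem_univ x) (mem_univ y) (sub_nonneg.2 hs₁) hs₀ (sub_add_cancel 1 s)
    rwa [show (1 - s) • x + s • y = x + s • (y - x) by module, smul_eq_mul, smul_eq_mul] at this
  have hinner : (inner ℂ g (s • (y - x)) : ℂ).re = s * (inner ℂ g (y - x) : ℂ).re := by
    rw [inner_smul_right_eq_smul, Complex.smul_re, smul_eq_mul]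
  simp only [Sh, add_sub_cancel_left, hinner, wnorm2_smul]
  linarith

lemma add_two_mul_nonpos_of_forall_le {L q : ℝ}
    (hle : ∀ s ∈ Ico (0 : ℝ) 1, L + q ≤ s * L + s ^ 2 * q) : L + 2 * q ≤ 0 := by
  have hlim : Tendsto (fun s : ℝ => L + (1 + s) * q) (𝓝[<] 1) (𝓝 (L + 2 * q)) :=
    tendsto_nhdsWithin_of_tendsto_nhds <| Continuous.tendsto' (by fun_prop) 1 _ (by ring)
  refine le_of_tendsto hlim (eventually_of_mem (Ico_mem_nhdsLT zero_lt_one) fun s hs => ?_)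
  -- `L + q - (s L + s² q) = (1 - s) (L + (1 + s) q)` and `1 - s > 0`
  have hfactor : (1 - s) * (L + (1 + s) * q) ≤ 0 := by nlinarith [hle s hs]
  exact nonpos_of_mul_nonpos_right hfactor (by linarith [hs.2])

lemma Sh_le_of_isMinOn {N : ℕ} {h : EC N → ℝ} (hconv : ConvexOn ℝ univ h)
    (W : Matrix (Fin N) (Fin N) ℂ) {C : Set (EC N)} (hCcv : Convex ℝ C) (α : ℝ) (g : EC N)
    {x xp : EC N} (hx : x ∈ C) (hxp : xp ∈ C)
    (hmin : IsMinOn (fun xb => Sh h W α g x xb) C xp) :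
    Sh h W α g x xp ≤ -(1 / (2 * α) * wnorm2 W (xp - x)) := by
  have hSxp : Sh h W α g x xp =
      ((inner ℂ g (xp - x) : ℂ).re + h xp - h x) + 1 / (2 * α) * wnorm2 W (xp - x) := by
    rw [Sh]; ring
  have hseg := add_two_mul_nonpos_of_forall_le fun s hs => by
    rw [← hSxp]
    exact (hmin (hCcv.add_smul_sub_mem hx hxp ⟨hs.1, hs.2.le⟩)).trans
      (Sh_add_smul_sub_le hconv W α g x xp hs.1 hs.2.le)
  linarith

lemma Dh_eq_of_isMinOn {N : ℕ} {h : EC N → ℝ} {W : Matrix (Fin N) (Fin N) ℂ} {C : Set (EC N)}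
    {α : ℝ} {g x xp : EC N} (hxp : xp ∈ C) (hmin : IsMinOn (fun xb => Sh h W α g x xb) C xp) :
    Dh h C W α g x = -(2 / α) * Sh h W α g x xp := by
  have hleast : IsLeast ((fun xb => Sh h W α g x xb) '' C) (Sh h W α g x xp) :=
    ⟨⟨xp, hxp, rfl⟩, by rintro _ ⟨y, hy, rfl⟩; exact hmin hy⟩
  rw [Dh, hleast.csInf_eq]

theorem stmt2_general {N : ℕ} (h : EC N → ℝ) (hconv : ConvexOn ℝ Set.univ h)
    (W : Matrix (Fin N) (Fin N) ℂ)
    (C : Set (EC N)) (hCcv : Convex ℝ C)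
    (α : ℝ) (hα : 0 < α) (g : EC N) (x : EC N) (hx : x ∈ C)
    (xp : EC N) (hxp : xp ∈ C)
    (hmin : IsMinOn (fun xb => Sh h W α g x xb) C xp)
    (G : EC N) (hG : G = (1 / α) • (x - xp)) :
    Dh h C W α g x ≥ wnorm2 W G := by
  have hS := Sh_le_of_isMinOn hconv W hCcv α g hx hxp hmin
  have hGnorm : wnorm2 W G = 2 / α * (1 / (2 * α) * wnorm2 W (xp - x)) := by
    rw [hG, show x - xp = (-1 : ℝ) • (xp - x) by module, smul_smul, wnorm2_smul]
    field_simp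
  rw [Dh_eq_of_isMinOn hxp hmin, hGnorm, ge_iff_le]
  have := mul_le_mul_of_nonneg_left hS (by positivity : (0 : ℝ) ≤ 2 / α)
  linarith

/-- Lower bound for `D_h^C` via the gradient mapping.
With `h` convex differentiable, `W` Hermitian positive definite, `C` nonempty
closed convex, `α > 0`, `x ∈ C`, and `x̄⁺ ∈ C` a minimizer over `C` of
`x̄ ↦ S_h(x̄, x, g, W, α)`, the generalized gradient mapping
`G = (1/α)(x − x̄⁺)` satisfies `D_h^C(x, g, W, α) ≥ ‖G‖_W²`. -/
theorem stmt2 {N : ℕ} (h : EC N → ℝ) (hconv : ConvexOn ℝ Set.univ h)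
    (hdiff : Differentiable ℝ h)
    (W : Matrix (Fin N) (Fin N) ℂ) (hW : W.PosDef)
    (C : Set (EC N)) (hCne : C.Nonempty) (hCcl : IsClosed C) (hCcv : Convex ℝ C)
    (α : ℝ) (hα : 0 < α) (g : EC N) (x : EC N) (hx : x ∈ C)
    (xp : EC N) (hxp : xp ∈ C)
    (hmin : IsMinOn (fun xb => Sh h W α g x xb) C xp)
    (G : EC N) (hG : G = (1 / α) • (x - xp)) :
    Dh h C W α g x ≥ wnorm2 W G :=
  stmt2_general h hconv W C hCcv α hα g x hx xp hxp hmin G hG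
end

section
/- Let f : ℂ^N → ℝ be differentiable (over ℝ) with L-Lipschitz gradient ∇f for some L > 0, let h : ℂ^N → ℝ be convex and differentiable, and set F = h + f. Let C ⊆ ℂ^N be a nonempty closed convex set with F* := inf_{x ∈ C} F(x) finite. Let 0 < η < η̄ and ν > 0. Suppose a sequence x₁, x₂, … in C is generated as follows: for each k, B_k ∈ ℂ^{N×N} is Hermitian with η·I_N ⪯ B_k ⪯ η̄·I_N, the stepsize satisfies 0 < α_min ≤ α_k ≤ η/L where α_min := inf_k α_k > 0, and x_{k+1} is a minimizer over C of x̄ ↦ S_h(x̄, x_k, ∇f(x_k), B_k, α_k). Moreover suppose the proximal Polyak–Łojasiewicz inequality D_h^C(z, ∇f(z), I_N, α/η̄) ≥ 2ν·(F(z) − F*) holds for all z ∈ C and all α ∈ (0, η/L]. Then for every K ≥ 1 the average over the first K iterates satisfies (1/K)·Σ_{k=1}^{K} (F(x_k) − F*) ≤ η̄·(F(x₁) − F*)/(ν·α_min·K); equivalently, if k' is drawn uniformly at random from {1, …, K}, then E[F(x_{k'}) − F*] ≤ η̄·(F(x₁) − F*)/(ν·α_min·K). -/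
/-!
By the descent lemma, `η • 1 ≤ B_k` and `α_k L ≤ η` make `S_h(·, x_k, ∇f(x_k), B_k, α_k)` a
majorant of `F − F(x_k)`. Since `B_k ≤ η̄ • 1`, its minimum over `C` is at most the infimum of
the unweighted surrogate with step `α_k / η̄`, i.e. `−(α_k / (2η̄)) D_h^C`, which the proximal PL
inequality bounds by `−(α_k ν / η̄)(F(x_k) − F*)`. Hence
`α_min ν (F(x_k) − F*) ≤ η̄ (F(x_k) − F(x_{k+1}))`, and summing over `k ≤ K` telescopes.
-/

open scoped ComplexOrder

section Descent

variable {E : Type*} [NormedAddCommGroup E] [NormedSpace ℝ E]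

/-- Descent lemma: `t ↦ f (x + t • d) - t * f' x d - L / 2 * t ^ 2 * ‖d‖ ^ 2` is antitone
on `[0, ∞)`, as its derivative `(f' (x + t • d) - f' x) d - L * t * ‖d‖ ^ 2` is nonpositive. -/
theorem le_add_fderiv_add_of_lipschitz_fderiv {f : E → ℝ} {f' : E → E →L[ℝ] ℝ} {L : ℝ}
    (hf : ∀ z, HasFDerivAt f (f' z) z) (hlip : ∀ z₁ z₂, ‖f' z₁ - f' z₂‖ ≤ L * ‖z₁ - z₂‖)
    (x d : E) : f (x + d) ≤ f x + f' x d + L / 2 * ‖d‖ ^ 2 := by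
  set ψ : ℝ → ℝ := fun t => f (x + t • d) - t * f' x d - L / 2 * t ^ 2 * ‖d‖ ^ 2
  have hψ : ∀ t, HasDerivAt ψ (f' (x + t • d) d - f' x d - L * t * ‖d‖ ^ 2) t := by
    intro t
    have hline : HasDerivAt (fun t : ℝ => x + t • d) d t := by
      simpa using ((hasDerivAt_id t).smul_const d).const_add x
    refine ((((hf _).comp_hasDerivAt t hline).sub ((hasDerivAt_id t).mul_const (f' x d))).sub
      (((hasDerivAt_pow 2 t).const_mul (L / 2)).mul_const (‖d‖ ^ 2))).congr_deriv ?_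
    simp only [one_mul, Nat.cast_ofNat]
    ring
  have hψ_nonpos : ∀ t ∈ interior (Set.Ici (0 : ℝ)),
      f' (x + t • d) d - f' x d - L * t * ‖d‖ ^ 2 ≤ 0 := by
    intro t ht
    rw [interior_Ici, Set.mem_Ioi] at ht
    rw [sub_nonpos]
    have hgrad : ‖f' (x + t • d) - f' x‖ ≤ L * (t * ‖d‖) := by
      simpa [norm_smul, abs_of_pos ht] using hlip (x + t • d) x
    calc f' (x + t • d) d - f' x d = (f' (x + t • d) - f' x) d := rfl
      _ ≤ ‖f' (x + t • d) - f' x‖ * ‖d‖ := (le_abs_self _).trans ((f' _ - f' x).le_opNorm d)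
      _ ≤ L * (t * ‖d‖) * ‖d‖ := by gcongr
      _ = L * t * ‖d‖ ^ 2 := by ring
  have hanti : AntitoneOn ψ (Set.Ici 0) :=
    antitoneOn_of_hasDerivWithinAt_nonpos (convex_Ici 0)
      (fun t _ => (hψ t).continuousAt.continuousWithinAt)
      (fun t _ => (hψ t).hasDerivWithinAt) hψ_nonpos
  have h01 := hanti Set.self_mem_Ici (Set.mem_Ici.2 zero_le_one) zero_le_one
  simp only [ψ, zero_smul, add_zero, one_smul, zero_mul, one_mul, sub_zero, one_pow,
    ne_eq, OfNat.ofNat_ne_zero, not_false_eq_true, zero_pow, mul_zero] at h01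
  linarith

end Descent

lemma gradDual_apply {N : ℕ} (g d : EC N) : gradDual g d = (inner ℂ g d : ℂ).re := rfl

lemma gradDual_sub {N : ℕ} (g₁ g₂ : EC N) : gradDual g₁ - gradDual g₂ = gradDual (g₁ - g₂) := by
  ext d
  simp [gradDual_apply]

lemma norm_gradDual_le {N : ℕ} (g : EC N) : ‖gradDual g‖ ≤ ‖g‖ :=
  ContinuousLinearMap.opNorm_le_bound _ (norm_nonneg g) fun d =>
    (Complex.abs_re_le_norm _).trans (norm_inner_le_norm g d)

section WeightedNorm

variable {N : ℕ}

lemma wnorm2_sub (M M' : Matrix (Fin N) (Fin N) ℂ) (z : EC N) :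
    wnorm2 (M - M') z = wnorm2 M z - wnorm2 M' z := by
  simp [wnorm2, Matrix.sub_mulVec, dotProduct_sub]

lemma wnorm2_smul_one (r : ℝ) (z : EC N) :
    wnorm2 (r • (1 : Matrix (Fin N) (Fin N) ℂ)) z = r * ‖z‖ ^ 2 := by
  have hinner : dotProduct (fun i => starRingEnd ℂ (z i)) (fun i => z i) = inner ℂ z z := by
    simp [inner, dotProduct, mul_comm]
  rw [wnorm2, Matrix.smul_mulVec, Matrix.one_mulVec, dotProduct_smul, hinner,
    Complex.real_smul, Complex.re_ofReal_mul, ← RCLike.re_to_complex, inner_self_eq_norm_sq]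

lemma wnorm2_one (z : EC N) : wnorm2 (1 : Matrix (Fin N) (Fin N) ℂ) z = ‖z‖ ^ 2 := by
  simpa using wnorm2_smul_one 1 z

lemma wnorm2_nonneg {M : Matrix (Fin N) (Fin N) ℂ} (hM : M.PosSemidef) (z : EC N) :
    0 ≤ wnorm2 M z := by
  simpa [wnorm2, dotProduct, Pi.star_def, Complex.star_def] using
    hM.re_dotProduct_nonneg (fun i => z i)

lemma mul_norm_sq_le_wnorm2 {M : Matrix (Fin N) (Fin N) ℂ} {η : ℝ}
    (hM : (M - η • (1 : Matrix (Fin N) (Fin N) ℂ)).PosSemidef) (z : EC N) :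
    η * ‖z‖ ^ 2 ≤ wnorm2 M z := by
  have := wnorm2_nonneg hM z
  rwa [wnorm2_sub, wnorm2_smul_one, sub_nonneg] at this

lemma wnorm2_le_mul_norm_sq {M : Matrix (Fin N) (Fin N) ℂ} {η : ℝ}
    (hM : (η • (1 : Matrix (Fin N) (Fin N) ℂ) - M).PosSemidef) (z : EC N) :
    wnorm2 M z ≤ η * ‖z‖ ^ 2 := by
  have := wnorm2_nonneg hM z
  rwa [wnorm2_sub, wnorm2_smul_one, sub_nonneg] at this

end WeightedNorm

section Surrogate

variable {N : ℕ} {h : EC N → ℝ} {B : Matrix (Fin N) (Fin N) ℂ} {α : ℝ}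

lemma add_sub_add_le_Sh {f : EC N → ℝ} {gradf : EC N → EC N} {L η : ℝ} (hL : 0 < L)
    (hfdiff : ∀ z : EC N, HasFDerivAt f (gradDual (gradf z)) z)
    (hlip : ∀ z₁ z₂ : EC N, ‖gradf z₁ - gradf z₂‖ ≤ L * ‖z₁ - z₂‖)
    (hB : (B - η • (1 : Matrix (Fin N) (Fin N) ℂ)).PosSemidef) (hα : 0 < α) (hαL : α ≤ η / L)
    (x xb : EC N) :
    h xb + f xb - (h x + f x) ≤ Sh h B α (gradf x) x xb := by
  have hdescent : f xb ≤ f x + (inner ℂ (gradf x) (xb - x) : ℂ).re + L / 2 * ‖xb - x‖ ^ 2 := by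
    simpa [gradDual_apply] using le_add_fderiv_add_of_lipschitz_fderiv hfdiff
      (fun z₁ z₂ => (gradDual_sub _ _ ▸ norm_gradDual_le _).trans (hlip z₁ z₂)) x (xb - x)
  have hquad : L / 2 * ‖xb - x‖ ^ 2 ≤ 1 / (2 * α) * wnorm2 B (xb - x) := by
    have hαη : α * L ≤ η := (le_div_iff₀ hL).mp hαL
    have hBη := mul_norm_sq_le_wnorm2 hB (xb - x)
    rw [one_div_mul_eq_div, le_div_iff₀ (by positivity)]
    nlinarith [sq_nonneg ‖xb - x‖]
  simp only [Sh]
  linarith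

lemma Sh_le_Sh_one {ηb : ℝ} (hB : (ηb • (1 : Matrix (Fin N) (Fin N) ℂ) - B).PosSemidef)
    (hα : 0 < α) (hηb : 0 < ηb) (g x xb : EC N) :
    Sh h B α g x xb ≤ Sh h 1 (α / ηb) g x xb := by
  have hscale : 1 / (2 * (α / ηb)) = 1 / (2 * α) * ηb := by field_simp
  have hBηb := mul_le_mul_of_nonneg_left (wnorm2_le_mul_norm_sq hB (xb - x))
    (by positivity : (0 : ℝ) ≤ 1 / (2 * α))
  simp only [Sh, wnorm2_one, hscale]
  linarith

lemma IsMinOn.Sh_le_neg_mul_Dh {C : Set (EC N)} (hC : C.Nonempty) {ηb : ℝ}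
    (hB : (ηb • (1 : Matrix (Fin N) (Fin N) ℂ) - B).PosSemidef) (hα : 0 < α) (hηb : 0 < ηb)
    {g x xmin : EC N} (hmin : IsMinOn (fun xb => Sh h B α g x xb) C xmin) :
    Sh h B α g x xmin ≤ -(α / ηb / 2) * Dh h C 1 (α / ηb) g x := by
  have hcancel : ∀ s : ℝ, -(α / ηb / 2) * (-(2 / (α / ηb)) * s) = s := fun s => by
    field_simp
  rw [Dh, hcancel]
  refine le_csInf (hC.image _) ?_
  rintro _ ⟨xb, hxb, rfl⟩
  exact (isMinOn_iff.mp hmin xb hxb).trans (Sh_le_Sh_one hB hα hηb g x xb)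

end Surrogate

theorem mul_gap_le_decrease_of_isMinOn_Sh {N : ℕ} {f : EC N → ℝ} {gradf : EC N → EC N} {L : ℝ}
    (hL : 0 < L) (hfdiff : ∀ z : EC N, HasFDerivAt f (gradDual (gradf z)) z)
    (hlip : ∀ z₁ z₂ : EC N, ‖gradf z₁ - gradf z₂‖ ≤ L * ‖z₁ - z₂‖) {h : EC N → ℝ}
    {C : Set (EC N)} (hC : C.Nonempty) {Fstar η ηb ν α : ℝ} (hηb : 0 < ηb)
    {B : Matrix (Fin N) (Fin N) ℂ} (hBlb : (B - η • (1 : Matrix (Fin N) (Fin N) ℂ)).PosSemidef)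
    (hBub : (ηb • (1 : Matrix (Fin N) (Fin N) ℂ) - B).PosSemidef) (hα : 0 < α)
    (hαL : α ≤ η / L) {x xnext : EC N}
    (hmin : IsMinOn (fun xb => Sh h B α (gradf x) x xb) C xnext)
    (hPL : Dh h C 1 (α / ηb) (gradf x) x ≥ 2 * ν * (h x + f x - Fstar)) :
    α * ν * (h x + f x - Fstar) ≤ ηb * (h x + f x - (h xnext + f xnext)) := by
  have hstep : h xnext + f xnext - (h x + f x) ≤ -(α / ηb / 2) * Dh h C 1 (α / ηb) (gradf x) x :=
    (add_sub_add_le_Sh hL hfdiff hlip hBlb hα hαL x xnext).trans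
      (hmin.Sh_le_neg_mul_Dh hC hBub hα hηb)
  have hPL' := mul_le_mul_of_nonneg_left hPL (by positivity : (0 : ℝ) ≤ α / ηb / 2)
  have hscale : α * ν * (h x + f x - Fstar) =
      ηb * (α / ηb / 2 * (2 * ν * (h x + f x - Fstar))) := by
    field_simp
  rw [hscale]
  exact mul_le_mul_of_nonneg_left (by linarith) hηb.le

theorem average_le_of_sufficient_decrease {a : ℕ → ℝ} {c M : ℝ} (hc : 0 < c) (hM : 0 ≤ M)
    (ha : ∀ k, 1 ≤ k → 0 ≤ a k) (hdec : ∀ k, 1 ≤ k → c * a k ≤ M * (a k - a (k + 1)))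
    {K : ℕ} (hK : 1 ≤ K) :
    (1 / (K : ℝ)) * ∑ k ∈ Finset.Icc 1 K, a k ≤ M * a 1 / (c * K) := by
  have htelescope : ∀ n : ℕ, c * ∑ k ∈ Finset.Icc 1 n, a k ≤ M * (a 1 - a (n + 1)) := by
    intro n
    induction n with
    | zero => simp
    | succ n ih =>
      rw [Finset.sum_Icc_succ_top (by omega), mul_add]
      linarith [hdec (n + 1) (by omega)]
  have hKpos : (0 : ℝ) < K := by exact_mod_cast hK
  rw [one_div_mul_eq_div, div_le_div_iff₀ hKpos (by positivity)]
  nlinarith [htelescope K, mul_nonneg hM (ha (K + 1) (by omega))]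

theorem stmt17_general {N : ℕ} (f : EC N → ℝ) (gradf : EC N → EC N) (L : ℝ) (hL : 0 < L)
    (hfdiff : ∀ z : EC N, HasFDerivAt f (gradDual (gradf z)) z)
    (hlip : ∀ z₁ z₂ : EC N, ‖gradf z₁ - gradf z₂‖ ≤ L * ‖z₁ - z₂‖)
    (h : EC N → ℝ)
    (F : EC N → ℝ) (hF : F = fun z => h z + f z)
    (C : Set (EC N)) (hCne : C.Nonempty)
    (Fstar : ℝ) (hFstar : IsGLB (F '' C) Fstar)
    (η ηb : ℝ) (hη : 0 < η) (hηηb : η < ηb) (ν : ℝ) (hν : 0 < ν)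
    (x : ℕ → EC N) (B : ℕ → Matrix (Fin N) (Fin N) ℂ) (α : ℕ → ℝ)
    (hxC : ∀ k, 1 ≤ k → x k ∈ C)
    (hBlb : ∀ k, 1 ≤ k → (B k - η • (1 : Matrix (Fin N) (Fin N) ℂ)).PosSemidef)
    (hBub : ∀ k, 1 ≤ k → (ηb • (1 : Matrix (Fin N) (Fin N) ℂ) - B k).PosSemidef)
    (αmin : ℝ) (hαmin : 0 < αmin)
    (hαlb : ∀ k, 1 ≤ k → αmin ≤ α k)
    (hαub : ∀ k, 1 ≤ k → α k ≤ η / L)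
    (hupd : ∀ k, 1 ≤ k →
      IsMinOn (fun xb => Sh h (B k) (α k) (gradf (x k)) (x k) xb) C (x (k + 1)))
    (hPL : ∀ z ∈ C, ∀ α' : ℝ, 0 < α' → α' ≤ η / L →
      Dh h C 1 (α' / ηb) (gradf z) z ≥ 2 * ν * (F z - Fstar)) :
    ∀ K : ℕ, 1 ≤ K →
      (1 / (K : ℝ)) * ∑ k ∈ Finset.Icc 1 K, (F (x k) - Fstar) ≤
        ηb * (F (x 1) - Fstar) / (ν * αmin * K) := by
  intro K hK
  have hηb : 0 < ηb := hη.trans hηηb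
  have hgap : ∀ k, 1 ≤ k → 0 ≤ F (x k) - Fstar := fun k hk =>
    sub_nonneg.2 (hFstar.1 ⟨x k, hxC k hk, rfl⟩)
  refine average_le_of_sufficient_decrease (by positivity) hηb.le hgap (fun k hk => ?_) hK
  have hαk : 0 < α k := hαmin.trans_le (hαlb k hk)
  have hdecrease := mul_gap_le_decrease_of_isMinOn_Sh hL hfdiff hlip hCne hηb (hBlb k hk)
    (hBub k hk) hαk (hαub k hk) (hupd k hk) (hF ▸ hPL (x k) (hxC k hk) (α k) hαk (hαub k hk))
  calc ν * αmin * (F (x k) - Fstar) ≤ α k * ν * (F (x k) - Fstar) := by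
        nlinarith [mul_nonneg hν.le (hgap k hk), hαlb k hk]
    _ ≤ ηb * (F (x k) - F (x (k + 1))) := by simpa only [hF] using hdecrease
    _ = _ := by ring

/-- Sublinear rate in expectation for a uniformly sampled
iterate. Under the same setting as Statement 16 but with stepsizes
`0 < α_min ≤ α_k ≤ η/L`, for every `K ≥ 1` the average of the first `K`
optimality gaps satisfies
`(1/K)·Σ_{k=1}^{K} (F(x_k) − F*) ≤ η̄(F(x₁) − F*)/(να_min·K)`; equivalently,
for `k'` uniform on `{1, …, K}`,
`E[F(x_{k'}) − F*] ≤ η̄(F(x₁) − F*)/(να_min·K)`. -/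
theorem stmt17 {N : ℕ} (f : EC N → ℝ) (gradf : EC N → EC N) (L : ℝ) (hL : 0 < L)
    (hfdiff : ∀ z : EC N, HasFDerivAt f (gradDual (gradf z)) z)
    (hlip : ∀ z₁ z₂ : EC N, ‖gradf z₁ - gradf z₂‖ ≤ L * ‖z₁ - z₂‖)
    (h : EC N → ℝ) (hconv : ConvexOn ℝ Set.univ h) (hdiff : Differentiable ℝ h)
    (F : EC N → ℝ) (hF : F = fun z => h z + f z)
    (C : Set (EC N)) (hCne : C.Nonempty) (hCcl : IsClosed C) (hCcv : Convex ℝ C)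
    (Fstar : ℝ) (hFstar : IsGLB (F '' C) Fstar)
    (η ηb : ℝ) (hη : 0 < η) (hηηb : η < ηb) (ν : ℝ) (hν : 0 < ν)
    (x : ℕ → EC N) (B : ℕ → Matrix (Fin N) (Fin N) ℂ) (α : ℕ → ℝ)
    (hxC : ∀ k, 1 ≤ k → x k ∈ C)
    (hBH : ∀ k, 1 ≤ k → (B k).IsHermitian)
    (hBlb : ∀ k, 1 ≤ k → (B k - η • (1 : Matrix (Fin N) (Fin N) ℂ)).PosSemidef)
    (hBub : ∀ k, 1 ≤ k → (ηb • (1 : Matrix (Fin N) (Fin N) ℂ) - B k).PosSemidef)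
    (αmin : ℝ) (hαmin : 0 < αmin)
    (hαlb : ∀ k, 1 ≤ k → αmin ≤ α k)
    (hαub : ∀ k, 1 ≤ k → α k ≤ η / L)
    (hupd : ∀ k, 1 ≤ k →
      IsMinOn (fun xb => Sh h (B k) (α k) (gradf (x k)) (x k) xb) C (x (k + 1)))
    (hPL : ∀ z ∈ C, ∀ α' : ℝ, 0 < α' → α' ≤ η / L →
      Dh h C 1 (α' / ηb) (gradf z) z ≥ 2 * ν * (F z - Fstar)) :
    ∀ K : ℕ, 1 ≤ K →
      (1 / (K : ℝ)) * ∑ k ∈ Finset.Icc 1 K, (F (x k) - Fstar) ≤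
        ηb * (F (x 1) - Fstar) / (ν * αmin * K) :=
  stmt17_general f gradf L hL hfdiff hlip h F hF C hCne Fstar hFstar η ηb hη hηηb ν hν x B α hxC
    hBlb hBub αmin hαmin hαlb hαub hupd hPL
end
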